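/- Let γ ∈ (0,1), R_max > 0, ε > 0, and p = (1-γ)²ε/(R_max − ε(1-γ)γ), assuming ε(1-γ) < R_max so that p > 0. Suppose a sequence (L_t) of nonnegative reals satisfies L_t ≤ p·R_max/(1-γ) + (1-p)·γ·L_{t+1} for all t, and L_t ≤ R_max/(1-γ) for all t. Then L_0 ≤ ε. -/

import Mathlib

/-! The affine map `y ↦ c + q y` with `0 ≤ q < 1` contracts towards its fixed point `ε`, so
`L t - ε ≤ qⁿ (L (t + n) - ε)`; as the sequence is bounded and `qⁿ → 0`, `L t ≤ ε`. The choice of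
`p` is exactly the one making `ε` the fixed point of `y ↦ p R_max / (1 - γ) + (1 - p) γ y`. -/

open Filter Topology

section ContractionRecursion

variable {x : ℕ → ℝ} {c q ε : ℝ}

theorem sub_le_pow_mul_sub_of_le_add_mul_succ (hq : 0 ≤ q) (hfix : c + q * ε = ε)
    (hrec : ∀ t, x t ≤ c + q * x (t + 1)) (t n : ℕ) :
    x t - ε ≤ q ^ n * (x (t + n) - ε) := by
  induction n with
  | zero => simp
  | succ n ih =>
    have step : x (t + n) - ε ≤ q * (x (t + n + 1) - ε) := by
      linarith [hrec (t + n)]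
    calc x t - ε ≤ q ^ n * (x (t + n) - ε) := ih
      _ ≤ q ^ n * (q * (x (t + n + 1) - ε)) := by gcongr
      _ = q ^ (n + 1) * (x (t + (n + 1)) - ε) := by ring_nf

theorem le_of_le_add_mul_succ_of_le {B : ℝ} (hq0 : 0 ≤ q) (hq1 : q < 1)
    (hfix : c + q * ε = ε) (hrec : ∀ t, x t ≤ c + q * x (t + 1)) (hB : ∀ t, x t ≤ B)
    (t : ℕ) : x t ≤ ε := by
  have hbound : ∀ n, x t - ε ≤ q ^ n * (B - ε) := fun n =>
    (sub_le_pow_mul_sub_of_le_add_mul_succ hq0 hfix hrec t n).trans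
      (by gcongr; exact hB _)
  have hlim : Tendsto (fun n => q ^ n * (B - ε)) atTop (𝓝 0) := by
    simpa using (tendsto_pow_atTop_nhds_zero_of_lt_one hq0 hq1).mul_const (B - ε)
  linarith [ge_of_tendsto hlim (Eventually.of_forall hbound)]

end ContractionRecursion

theorem loss_recursion_bound_general (γ Rmax ε p : ℝ) (hγ0 : 0 < γ) (hγ1 : γ < 1)
    (hε : 0 < ε) (hεR : ε * (1 - γ) < Rmax)
    (hp : p = (1 - γ) ^ 2 * ε / (Rmax - ε * (1 - γ) * γ))
    (L : ℕ → ℝ)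
    (hLrec : ∀ t, L t ≤ p * (Rmax / (1 - γ)) + (1 - p) * γ * L (t + 1))
    (hLub : ∀ t, L t ≤ Rmax / (1 - γ)) :
    L 0 ≤ ε := by
  have hγ' : 0 < 1 - γ := by linarith
  have hD : 0 < Rmax - ε * (1 - γ) * γ := by nlinarith
  have hp0 : 0 ≤ p := by rw [hp]; positivity
  have hp1 : p < 1 := by rw [hp, div_lt_one hD]; nlinarith
  have hfix : p * (Rmax / (1 - γ)) + (1 - p) * γ * ε = ε := by
    rw [hp]
    field_simp [show Rmax - γ * (1 - γ) * ε ≠ 0 by linarith]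
    ring
  exact le_of_le_add_mul_succ_of_le (by nlinarith) (by nlinarith) hfix hLrec hLub 0

/-- if the loss sequence (L t) satisfies
L t ≤ p·R_max/(1-γ) + (1-p)·γ·L (t+1) and L t ≤ R_max/(1-γ), where
p = (1-γ)²ε/(R_max − ε(1-γ)γ) > 0, then L 0 ≤ ε. -/
theorem loss_recursion_bound (γ Rmax ε p : ℝ) (hγ0 : 0 < γ) (hγ1 : γ < 1)
    (hR : 0 < Rmax) (hε : 0 < ε) (hεR : ε * (1 - γ) < Rmax)
    (hp : p = (1 - γ) ^ 2 * ε / (Rmax - ε * (1 - γ) * γ))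
    (L : ℕ → ℝ) (hL0 : ∀ t, 0 ≤ L t)
    (hLrec : ∀ t, L t ≤ p * (Rmax / (1 - γ)) + (1 - p) * γ * L (t + 1))
    (hLub : ∀ t, L t ≤ Rmax / (1 - γ)) :
    L 0 ≤ ε :=
  loss_recursion_bound_general γ Rmax ε p hγ0 hγ1 hε hεR hp L hLrec hLub
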